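/- arXiv:1501.02949 — 2 statements merged into one kernel-verified Lean document; each statement's English description precedes it below -/
import Mathlib

section
/- Let Ω ⊆ ℝⁿ be a bounded open convex set of diameter δ, let d : ℝⁿ → ℝ be an affine function with |Dd| = 1 and 0 ≤ d ≤ δ on Ω (the distance to a supporting hyperplane), let ψ : ℝⁿ → ℝᵐ be C², and let f : Ω × [0,T) → ℝᵐ be a smooth solution of ∂f^α/∂t = Σ_{i,j} g^{ij} ∂²f^α/∂xⁱ∂xʲ with (g^{ij}) the inverse of g_{ij} = δ_{ij} − Σ_β (∂f^β/∂xⁱ)(∂f^β/∂xʲ), and assume ξ := sup |Df|² < 1. Fix α and constants v, k > 0 and set S(x,t) := v·log(1 + k·d(x)) − (f^α(x,t) − ψ^α(x)). If v k²/(1+kδ)² ≥ (n/(1−ξ)) · sup_Ω |D²ψ|, then (∂/∂t − Σ_{i,j} g^{ij} ∂²/∂xⁱ∂xʲ) S ≥ 0 on Ω × [0,T), i.e. S is a supersolution of the linearized parabolic operator. -/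
open Matrix

noncomputable section

/-- The (spatial) Jacobian matrix of `f : ℝⁿ → ℝᵐ` at `x` (Euclidean spaces). -/
def jacM (n m : ℕ) (f : EuclideanSpace ℝ (Fin n) → EuclideanSpace ℝ (Fin m))
    (x : EuclideanSpace ℝ (Fin n)) : Matrix (Fin m) (Fin n) ℝ :=
  Matrix.of fun α i => fderiv ℝ f x (EuclideanSpace.single i 1) α

/-- The second partial derivative `∂²f^α/∂xⁱ∂xʲ`. -/
def hessM (n m : ℕ) (f : EuclideanSpace ℝ (Fin n) → EuclideanSpace ℝ (Fin m))
    (x : EuclideanSpace ℝ (Fin n)) (i j : Fin n) (α : Fin m) : ℝ :=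
  fderiv ℝ (fun y => fderiv ℝ f y (EuclideanSpace.single j 1) α) x
    (EuclideanSpace.single i 1)

/-- The barrier function `S(x,t) = v·log(1 + k·d(x)) − (f^α(x,t) − ψ^α(x))`, where
`d(x) = ⟪w,x⟫ + c₀` is the affine distance function to a supporting hyperplane. -/
def barrierS (n m : ℕ) (v k c₀ : ℝ) (w : EuclideanSpace ℝ (Fin n)) (α : Fin m)
    (ψ : EuclideanSpace ℝ (Fin n) → EuclideanSpace ℝ (Fin m))
    (f : ℝ → EuclideanSpace ℝ (Fin n) → EuclideanSpace ℝ (Fin m))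
    (t : ℝ) (x : EuclideanSpace ℝ (Fin n)) : ℝ :=
  v * Real.log (1 + k * ((inner ℝ w x : ℝ) + c₀)) - (f t x α - ψ x α)

/- ### Auxiliary lemmas -/

lemma euclid_sum_single (n : ℕ) (u : EuclideanSpace ℝ (Fin n)) :
    u = ∑ i, u i • EuclideanSpace.single i 1 := by
  ext j
  have h : (∑ i, u i • EuclideanSpace.single i (1:ℝ)) j
      = ∑ i, (u i • EuclideanSpace.single i (1:ℝ)) j := by rw [WithLp.ofLp_sum]; exact Finset.sum_apply j Finset.univ _
  rw [h]; simp [EuclideanSpace.single_apply]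

lemma clm_apply_expand {n : ℕ} {F : Type*} [NormedAddCommGroup F] [NormedSpace ℝ F]
    (T : EuclideanSpace ℝ (Fin n) →L[ℝ] F) (u : EuclideanSpace ℝ (Fin n)) :
    T u = ∑ i, u i • T (EuclideanSpace.single i 1) := by
  conv_lhs => rw [euclid_sum_single n u]
  rw [map_sum]
  simp

lemma abs_coord_le (m : ℕ) (z : EuclideanSpace ℝ (Fin m)) (β : Fin m) : |z β| ≤ ‖z‖ := by
  have h1 : (z β) ^ 2 ≤ ∑ i, ‖z i‖ ^ 2 := by
    have : ‖z β‖ ^ 2 ≤ ∑ i, ‖z i‖ ^ 2 :=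
      Finset.single_le_sum (fun i _ => sq_nonneg ‖z i‖) (Finset.mem_univ β)
    simpa [Real.norm_eq_abs, sq_abs] using this
  have h2 : ‖z‖ = Real.sqrt (∑ i, ‖z i‖ ^ 2) := by
    rw [EuclideanSpace.norm_eq]
  rw [h2, ← Real.sqrt_sq_eq_abs]
  exact Real.sqrt_le_sqrt h1

lemma double_sum_decomp (n : ℕ) (c : Fin n → ℝ) (u : Fin n → Fin n → ℝ) (G : Fin n → Fin n → ℝ) :
    ∑ i, ∑ j, (∑ p, c p * (u p i * u p j)) * G i j
      = ∑ p, c p * (∑ i, ∑ j, (u p i * u p j) * G i j) := by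
  simp only [Finset.sum_mul]
  have h1 : ∀ i : Fin n, ∑ j, ∑ p, c p * (u p i * u p j) * G i j
      = ∑ p, ∑ j, c p * (u p i * u p j) * G i j := fun i => Finset.sum_comm
  simp only [h1]
  rw [Finset.sum_comm]
  apply Finset.sum_congr rfl
  intro p _
  simp only [Finset.mul_sum]
  apply Finset.sum_congr rfl
  intro i _
  apply Finset.sum_congr rfl
  intro j _
  ring

lemma dot_eq_inner (n : ℕ) (x y : EuclideanSpace ℝ (Fin n)) :
    (x : Fin n → ℝ) ⬝ᵥ (y : Fin n → ℝ) = (inner ℝ x y : ℝ) := by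
  simp [PiLp.inner_apply, dotProduct, RCLike.inner_apply, mul_comm]

lemma eigen_decomp (n : ℕ) (g : Matrix (Fin n) (Fin n) ℝ) (hherm : g.IsHermitian)
    (a : ℝ) (ha : 0 < a)
    (hlb : ∀ u : EuclideanSpace ℝ (Fin n), a * ‖u‖ ^ 2 ≤ (u : Fin n → ℝ) ⬝ᵥ (g *ᵥ u))
    (hub : ∀ u : EuclideanSpace ℝ (Fin n), (u : Fin n → ℝ) ⬝ᵥ (g *ᵥ u) ≤ ‖u‖ ^ 2) :
    ∃ (lam : Fin n → ℝ) (u : Fin n → EuclideanSpace ℝ (Fin n)),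
      (∀ p, a ≤ lam p) ∧ (∀ p, lam p ≤ 1) ∧ (∀ p, ‖u p‖ = 1) ∧
      (∀ i j, g⁻¹ i j = ∑ p, (lam p)⁻¹ * (u p i * u p j)) ∧
      (∀ y : EuclideanSpace ℝ (Fin n), ∑ p, (∑ i, u p i * y i) ^ 2 = ‖y‖ ^ 2) := by
  classical
  set lam := hherm.eigenvalues with hlam
  set b := hherm.eigenvectorBasis with hb
  have hnorm : ∀ p, ‖b p‖ = 1 := fun p => b.orthonormal.1 p
  have heig : ∀ p, g *ᵥ (b p : Fin n → ℝ) = lam p • (b p : Fin n → ℝ) := fun p =>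
    hherm.mulVec_eigenvectorBasis p
  have hinnerself : ∀ p, ((b p : Fin n → ℝ) ⬝ᵥ (b p : Fin n → ℝ)) = 1 := by
    intro p
    rw [dot_eq_inner, real_inner_self_eq_norm_sq, hnorm p]; norm_num
  have hval : ∀ p, (b p : Fin n → ℝ) ⬝ᵥ (g *ᵥ (b p : Fin n → ℝ)) = lam p := by
    intro p
    rw [heig p, dotProduct_smul, hinnerself p]
    simp
  have hlb' : ∀ p, a ≤ lam p := by
    intro p
    have := hlb (b p)
    rw [hval p, hnorm p] at this; simpa using this
  have hub' : ∀ p, lam p ≤ 1 := by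
    intro p
    have := hub (b p)
    rw [hval p, hnorm p] at this; simpa using this
  have hpos : ∀ p, 0 < lam p := fun p => lt_of_lt_of_le ha (hlb' p)
  have hdet : IsUnit g.det := by
    rw [hherm.det_eq_prod_eigenvalues]
    exact (Finset.prod_pos (fun p _ => by exact_mod_cast hpos p)).ne'.isUnit
  have hBu : ∀ p, g⁻¹ *ᵥ (b p : Fin n → ℝ) = (lam p)⁻¹ • (b p : Fin n → ℝ) := by
    intro p
    have h1 : g⁻¹ *ᵥ (g *ᵥ (b p : Fin n → ℝ)) = (b p : Fin n → ℝ) := by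
      rw [mulVec_mulVec, nonsing_inv_mul g hdet, one_mulVec]
    rw [heig p, mulVec_smul] at h1
    have h2 := congrArg (fun z => (lam p)⁻¹ • z) h1
    simp only [smul_smul, inv_mul_cancel₀ (hpos p).ne', one_smul] at h2
    exact h2
  refine ⟨lam, fun p => b p, hlb', hub', hnorm, ?_, ?_⟩
  · intro i j
    have hej : ∑ p, (inner ℝ (b p) (EuclideanSpace.single j (1:ℝ)) : ℝ) • b p
        = EuclideanSpace.single j (1:ℝ) := b.sum_repr' _
    have hc : ∀ p, (inner ℝ (b p) (EuclideanSpace.single j (1:ℝ)) : ℝ) = b p j := by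
      intro p; simp [PiLp.inner_apply, EuclideanSpace.single_apply, RCLike.inner_apply]
    have h1 : g⁻¹ i j = (g⁻¹ *ᵥ (Pi.single j (1:ℝ))) i := by
      rw [mulVec_single]; simp
    have hsingle : (Pi.single j (1:ℝ)) = ((EuclideanSpace.single j (1:ℝ) : EuclideanSpace ℝ (Fin n)) : Fin n → ℝ) := by
      ext r; simp [EuclideanSpace.single_apply, Pi.single_apply]
    rw [h1, hsingle, ← hej]
    have hlin : g⁻¹ *ᵥ ((∑ p, (inner ℝ (b p) (EuclideanSpace.single j (1:ℝ)) : ℝ) • b p : EuclideanSpace ℝ (Fin n)) : Fin n → ℝ)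
        = ∑ p, (inner ℝ (b p) (EuclideanSpace.single j (1:ℝ)) : ℝ) • (g⁻¹ *ᵥ (b p : Fin n → ℝ)) := by
      simp only [← Matrix.mulVecLin_apply, WithLp.ofLp_sum, WithLp.ofLp_smul, map_sum, _root_.map_smul]
    rw [hlin]
    simp only [hBu, hc]
    rw [Finset.sum_apply]
    congr 1; ext p
    simp [smul_smul]
    ring
  · intro y
    have hcomm : ∀ p, (inner ℝ y (b p) : ℝ) = inner ℝ (b p) y := fun p => real_inner_comm _ _
    have h2 : ∀ p, (inner ℝ (b p) y : ℝ) = ∑ i, b p i * y i := by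
      intro p; simp [PiLp.inner_apply, RCLike.inner_apply]; exact Finset.sum_congr rfl (fun _ _ => mul_comm _ _)
    calc ∑ p, (∑ i, b p i * y i) ^ 2 = ∑ p, (inner ℝ y (b p) : ℝ) * (inner ℝ (b p) y : ℝ) := by
          apply Finset.sum_congr rfl; intro p _; rw [hcomm, h2]; ring
      _ = (inner ℝ y y : ℝ) := b.sum_inner_mul_inner y y
      _ = ‖y‖ ^ 2 := real_inner_self_eq_norm_sq y

set_option maxHeartbeats 2000000 in
/-- the barrier is a supersolution: with `Ω ⊆ ℝⁿ` bounded open convex of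
diameter `δ`, `d(x) = ⟪w,x⟫ + c₀` affine with `|Dd| = ‖w‖ = 1` and `0 ≤ d ≤ δ` on `Ω`,
`ψ` C², `f` a smooth solution of `∂f^α/∂t = Σ g^{ij} ∂²f^α/∂xⁱ∂xʲ` with
`ξ ≥ sup|Df|²`, `ξ < 1`: if `v k²/(1+kδ)² ≥ (n/(1−ξ))·sup_Ω|D²ψ|` (with `K2` an upper
bound for `|D²ψ|` on `Ω`), then `(∂/∂t − Σ g^{ij} ∂²/∂xⁱ∂xʲ) S ≥ 0` on `Ω × [0,T)`. -/
theorem stmt4 (n m : ℕ) (T δ : ℝ) (hT : 0 < T)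
    (Ω : Set (EuclideanSpace ℝ (Fin n)))
    (hΩo : IsOpen Ω) (hne : Ω.Nonempty) (hconv : Convex ℝ Ω)
    (hbdd : Bornology.IsBounded Ω) (hδ : δ = Metric.diam Ω)
    (w : EuclideanSpace ℝ (Fin n)) (c₀ : ℝ) (hw : ‖w‖ = 1)
    (hd : ∀ x ∈ Ω, 0 ≤ (inner ℝ w x : ℝ) + c₀ ∧ (inner ℝ w x : ℝ) + c₀ ≤ δ)
    (ψ : EuclideanSpace ℝ (Fin n) → EuclideanSpace ℝ (Fin m)) (hψ : ContDiff ℝ 2 ψ)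
    (f : ℝ → EuclideanSpace ℝ (Fin n) → EuclideanSpace ℝ (Fin m))
    (hsmooth : ∀ t ∈ Set.Ico (0 : ℝ) T, ContDiffOn ℝ (⊤ : ℕ∞) (f t) Ω)
    (hpde : ∀ t ∈ Set.Ico (0 : ℝ) T, ∀ x ∈ Ω, ∀ β : Fin m,
      HasDerivWithinAt (fun s => f s x β)
        (∑ i, ∑ j,
          ((1 : Matrix (Fin n) (Fin n) ℝ) - (jacM n m (f t) x)ᵀ * jacM n m (f t) x)⁻¹ i j *
            hessM n m (f t) x i j β)
        (Set.Ici t) t)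
    (ξ : ℝ) (hξ1 : ξ < 1)
    (hξ : ∀ t ∈ Set.Ico (0 : ℝ) T, ∀ x ∈ Ω, ‖fderiv ℝ (f t) x‖ ^ 2 ≤ ξ)
    (α : Fin m) (v k : ℝ) (hv : 0 < v) (hk : 0 < k)
    (K2 : ℝ)
    (hK2 : ∀ x ∈ Ω, ∀ u : EuclideanSpace ℝ (Fin n), ‖u‖ = 1 →
      ‖fderiv ℝ (fderiv ℝ ψ) x u u‖ ≤ K2)
    (hconstraint : (n / (1 - ξ)) * K2 ≤ v * k ^ 2 / (1 + k * δ) ^ 2) :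
    ∀ t ∈ Set.Ico (0 : ℝ) T, ∀ x ∈ Ω, ∀ St : ℝ,
      HasDerivWithinAt (fun s => barrierS n m v k c₀ w α ψ f s x) St (Set.Ici t) t →
      0 ≤ St - ∑ i, ∑ j,
        ((1 : Matrix (Fin n) (Fin n) ℝ) - (jacM n m (f t) x)ᵀ * jacM n m (f t) x)⁻¹ i j *
          fderiv ℝ (fun y => fderiv ℝ (barrierS n m v k c₀ w α ψ f t) y
            (EuclideanSpace.single j 1)) x (EuclideanSpace.single i 1) := by
  intro t ht x hx St hSt
  set A := jacM n m (f t) x with hA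
  set g : Matrix (Fin n) (Fin n) ℝ := (1 : Matrix (Fin n) (Fin n) ℝ) - Aᵀ * A with hgdef
  -- basic positivity facts
  have hδ0 : 0 ≤ δ := by rw [hδ]; exact Metric.diam_nonneg
  have hdx0 : 0 ≤ (inner ℝ w x : ℝ) + c₀ := (hd x hx).1
  have hdxδ : (inner ℝ w x : ℝ) + c₀ ≤ δ := (hd x hx).2
  have hpos1 : ∀ y ∈ Ω, (0:ℝ) < 1 + k * ((inner ℝ w y : ℝ) + c₀) := by
    intro y hy
    have := (hd y hy).1
    nlinarith
  have h1δ : (0:ℝ) < 1 + k * δ := by nlinarith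
  have hle1 : 1 + k * ((inner ℝ w x : ℝ) + c₀) ≤ 1 + k * δ := by nlinarith
  -- differentiability
  have hft := hsmooth t ht
  have hfdiff : ∀ y ∈ Ω, DifferentiableAt ℝ (f t) y := fun y hy =>
    (hft.differentiableOn (by simp)).differentiableAt (hΩo.mem_nhds hy)
  have hψdiff : Differentiable ℝ ψ := hψ.differentiable (by norm_num)
  have hbase : ∀ y : EuclideanSpace ℝ (Fin n),
      HasFDerivAt (fun z : EuclideanSpace ℝ (Fin n) => 1 + k * ((inner ℝ w z : ℝ) + c₀))
        (k • (innerSL ℝ w : EuclideanSpace ℝ (Fin n) →L[ℝ] ℝ)) y := fun y =>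
    ((((innerSL ℝ w).hasFDerivAt).add_const c₀).const_mul k).const_add 1
  have hwj : ∀ j : Fin n, (inner ℝ w (EuclideanSpace.single j (1:ℝ)) : ℝ) = w j := by
    intro j; simp [PiLp.inner_apply, EuclideanSpace.single_apply, RCLike.inner_apply]
  -- spatial derivative of the barrier on Ω
  have hSder : ∀ y ∈ Ω, HasFDerivAt (barrierS n m v k c₀ w α ψ f t)
      (v • ((1 + k * ((inner ℝ w y : ℝ) + c₀))⁻¹ • (k • (innerSL ℝ w : EuclideanSpace ℝ (Fin n) →L[ℝ] ℝ)))
        - ((EuclideanSpace.proj α : EuclideanSpace ℝ (Fin m) →L[ℝ] ℝ).comp (fderiv ℝ (f t) y)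
          - (EuclideanSpace.proj α : EuclideanSpace ℝ (Fin m) →L[ℝ] ℝ).comp (fderiv ℝ ψ y))) y := by
    intro y hy
    have h1 := ((Real.hasDerivAt_log (hpos1 y hy).ne').comp_hasFDerivAt y (hbase y)).const_mul v
    have h2 : HasFDerivAt (fun z => f t z α)
        ((EuclideanSpace.proj α : EuclideanSpace ℝ (Fin m) →L[ℝ] ℝ).comp (fderiv ℝ (f t) y)) y := by
      have := (EuclideanSpace.proj α : EuclideanSpace ℝ (Fin m) →L[ℝ] ℝ).hasFDerivAt.comp y
        (hfdiff y hy).hasFDerivAt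
      exact this
    have h3 : HasFDerivAt (fun z => ψ z α)
        ((EuclideanSpace.proj α : EuclideanSpace ℝ (Fin m) →L[ℝ] ℝ).comp (fderiv ℝ ψ y)) y := by
      have := (EuclideanSpace.proj α : EuclideanSpace ℝ (Fin m) →L[ℝ] ℝ).hasFDerivAt.comp y
        (hψdiff y).hasFDerivAt
      exact this
    exact h1.sub (h2.sub h3)
  -- first derivative values
  have hfd1 : ∀ y ∈ Ω, ∀ j : Fin n,
      fderiv ℝ (barrierS n m v k c₀ w α ψ f t) y (EuclideanSpace.single j 1)
        = (v * k * w j) * (1 + k * ((inner ℝ w y : ℝ) + c₀))⁻¹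
          - fderiv ℝ (f t) y (EuclideanSpace.single j 1) α
          + fderiv ℝ ψ y (EuclideanSpace.single j 1) α := by
    intro y hy j
    rw [(hSder y hy).fderiv]
    simp only [ContinuousLinearMap.sub_apply, ContinuousLinearMap.smul_apply, smul_eq_mul,
      innerSL_apply_apply, ContinuousLinearMap.coe_comp', Function.comp_apply,
      PiLp.proj_apply]
    rw [hwj j]
    ring
  -- second derivative pieces
  have hcont1 : ContDiffOn ℝ 1 (fderiv ℝ (f t)) Ω :=
    hft.fderiv_of_isOpen hΩo (by exact WithTop.coe_le_coe.mpr le_top)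
  have hdf2 : DifferentiableAt ℝ (fderiv ℝ (f t)) x :=
    (hcont1.differentiableOn one_ne_zero).differentiableAt (hΩo.mem_nhds hx)
  have hdψ2 : DifferentiableAt ℝ (fderiv ℝ ψ) x :=
    ((hψ.fderiv_right (by norm_num)).differentiable one_ne_zero) x
  have hsec : ∀ i j : Fin n,
      fderiv ℝ (fun y => fderiv ℝ (barrierS n m v k c₀ w α ψ f t) y
          (EuclideanSpace.single j 1)) x (EuclideanSpace.single i 1)
        = -(v * k ^ 2 * (w i * w j)) * ((1 + k * ((inner ℝ w x : ℝ) + c₀)) ^ 2)⁻¹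
          - hessM n m (f t) x i j α
          + fderiv ℝ (fderiv ℝ ψ) x (EuclideanSpace.single i 1) (EuclideanSpace.single j 1) α := by
    intro i j
    have hEq : (fun y => fderiv ℝ (barrierS n m v k c₀ w α ψ f t) y (EuclideanSpace.single j 1))
        =ᶠ[nhds x] (fun y => (v * k * w j) * (1 + k * ((inner ℝ w y : ℝ) + c₀))⁻¹
          - fderiv ℝ (f t) y (EuclideanSpace.single j 1) α
          + fderiv ℝ ψ y (EuclideanSpace.single j 1) α) :=
      Filter.eventuallyEq_of_mem (hΩo.mem_nhds hx) (fun y hy => hfd1 y hy j)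
    rw [hEq.fderiv_eq]
    set Φf : (EuclideanSpace ℝ (Fin n) →L[ℝ] EuclideanSpace ℝ (Fin m)) →L[ℝ] ℝ :=
      (EuclideanSpace.proj α : EuclideanSpace ℝ (Fin m) →L[ℝ] ℝ).comp
        (ContinuousLinearMap.apply ℝ (EuclideanSpace ℝ (Fin m)) (EuclideanSpace.single j 1))
      with hΦf
    have hterm1 : HasFDerivAt
        (fun z : EuclideanSpace ℝ (Fin n) => (v * k * w j) * (1 + k * ((inner ℝ w z : ℝ) + c₀))⁻¹)
        ((v * k * w j) • ((-(((1 + k * ((inner ℝ w x : ℝ) + c₀)) ^ 2)⁻¹))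
          • (k • (innerSL ℝ w : EuclideanSpace ℝ (Fin n) →L[ℝ] ℝ)))) x :=
      ((hasDerivAt_inv (hpos1 x hx).ne').comp_hasFDerivAt x (hbase x)).const_mul _
    have hterm2 : HasFDerivAt (fun y => fderiv ℝ (f t) y (EuclideanSpace.single j 1) α)
        (Φf.comp (fderiv ℝ (fderiv ℝ (f t)) x)) x := by
      have := Φf.hasFDerivAt.comp x hdf2.hasFDerivAt
      exact this
    have hterm3 : HasFDerivAt (fun y => fderiv ℝ ψ y (EuclideanSpace.single j 1) α)
        (Φf.comp (fderiv ℝ (fderiv ℝ ψ) x)) x := by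
      have := Φf.hasFDerivAt.comp x hdψ2.hasFDerivAt
      exact this
    have hfder2 : fderiv ℝ (fun y => (v * k * w j) * (1 + k * ((inner ℝ w y : ℝ) + c₀))⁻¹
          - fderiv ℝ (f t) y (EuclideanSpace.single j 1) α
          + fderiv ℝ ψ y (EuclideanSpace.single j 1) α) x
        = ((v * k * w j) • ((-(((1 + k * ((inner ℝ w x : ℝ) + c₀)) ^ 2)⁻¹))
            • (k • (innerSL ℝ w : EuclideanSpace ℝ (Fin n) →L[ℝ] ℝ)))
          - Φf.comp (fderiv ℝ (fderiv ℝ (f t)) x)) + Φf.comp (fderiv ℝ (fderiv ℝ ψ) x) :=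
      HasFDerivAt.fderiv (by exact (hterm1.sub hterm2).add hterm3)
    rw [hfder2]
    have hhess : hessM n m (f t) x i j α
        = (Φf.comp (fderiv ℝ (fderiv ℝ (f t)) x)) (EuclideanSpace.single i 1) := by
      have h0 : hessM n m (f t) x i j α
          = fderiv ℝ (fun y => fderiv ℝ (f t) y (EuclideanSpace.single j 1) α) x
              (EuclideanSpace.single i 1) := rfl
      rw [h0, hterm2.fderiv]
    rw [hhess]
    have hGψ : fderiv ℝ (fderiv ℝ ψ) x (EuclideanSpace.single i 1) (EuclideanSpace.single j 1) α
        = (Φf.comp (fderiv ℝ (fderiv ℝ ψ) x)) (EuclideanSpace.single i 1) := rfl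
    rw [hGψ]
    simp only [ContinuousLinearMap.add_apply, ContinuousLinearMap.sub_apply,
      ContinuousLinearMap.smul_apply, smul_eq_mul, innerSL_apply_apply]
    rw [hwj i]
    ring
  -- time derivative
  have hFt := hpde t ht x hx α
  rw [← hA, ← hgdef] at hFt
  set Fsum := ∑ i, ∑ j, g⁻¹ i j * hessM n m (f t) x i j α with hFsum
  have hbt : HasDerivWithinAt (fun s => barrierS n m v k c₀ w α ψ f s x) (-Fsum) (Set.Ici t) t := by
    have h1 := (hFt.sub_const (ψ x α)).const_sub
      (v * Real.log (1 + k * ((inner ℝ w x : ℝ) + c₀)))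
    exact h1
  have hSt' : St = -Fsum :=
    (hSt.derivWithin (uniqueDiffOn_Ici t t Set.self_mem_Ici)).symm.trans
      (hbt.derivWithin (uniqueDiffOn_Ici t t Set.self_mem_Ici))
  -- matrix estimates
  have hherm : g.IsHermitian := by
    rw [hgdef]
    exact Matrix.isHermitian_one.sub (Matrix.isHermitian_conjTranspose_mul_self A)
  have hAu : ∀ u : EuclideanSpace ℝ (Fin n),
      (A *ᵥ (u : Fin n → ℝ)) = fun β => fderiv ℝ (f t) x u β := by
    intro u; funext β
    have h0 : fderiv ℝ (f t) x u β
        = ∑ i, u i * fderiv ℝ (f t) x (EuclideanSpace.single i 1) β := by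
      rw [clm_apply_expand (fderiv ℝ (f t) x) u]
      rw [WithLp.ofLp_sum, Finset.sum_apply]
      simp
    rw [h0]
    simp only [hA, Matrix.mulVec, dotProduct, jacM, Matrix.of_apply]
    apply Finset.sum_congr rfl
    intro i _
    ring
  have hquad : ∀ u : EuclideanSpace ℝ (Fin n),
      (u : Fin n → ℝ) ⬝ᵥ (g *ᵥ u) = ‖u‖ ^ 2 - ‖fderiv ℝ (f t) x u‖ ^ 2 := by
    intro u
    have h2 : (u : Fin n → ℝ) ⬝ᵥ (u : Fin n → ℝ) = ‖u‖ ^ 2 := by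
      rw [dot_eq_inner]; exact real_inner_self_eq_norm_sq u
    have h3 : (u : Fin n → ℝ) ⬝ᵥ (Aᵀ *ᵥ (A *ᵥ (u : Fin n → ℝ)))
        = ‖fderiv ℝ (f t) x u‖ ^ 2 := by
      rw [dotProduct_mulVec, vecMul_transpose, hAu u]
      have h4 : (fun β => fderiv ℝ (f t) x u β)
          = ((fderiv ℝ (f t) x u : EuclideanSpace ℝ (Fin m)) : Fin m → ℝ) := rfl
      rw [h4, dot_eq_inner, real_inner_self_eq_norm_sq]
    have hg1 : g *ᵥ (u : Fin n → ℝ)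
        = ((1 : Matrix (Fin n) (Fin n) ℝ) - Aᵀ * A) *ᵥ (u : Fin n → ℝ) := by rw [hgdef]
    rw [hg1, Matrix.sub_mulVec, Matrix.one_mulVec, dotProduct_sub, ← Matrix.mulVec_mulVec,
      h2, h3]
  have hop : ∀ u : EuclideanSpace ℝ (Fin n), ‖fderiv ℝ (f t) x u‖ ^ 2 ≤ ξ * ‖u‖ ^ 2 := by
    intro u
    have h1 := (fderiv ℝ (f t) x).le_opNorm u
    have h2 := hξ t ht x hx
    calc ‖fderiv ℝ (f t) x u‖ ^ 2 ≤ (‖fderiv ℝ (f t) x‖ * ‖u‖) ^ 2 :=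
          pow_le_pow_left₀ (norm_nonneg _) h1 2
      _ = ‖fderiv ℝ (f t) x‖ ^ 2 * ‖u‖ ^ 2 := by ring
      _ ≤ ξ * ‖u‖ ^ 2 := mul_le_mul_of_nonneg_right h2 (sq_nonneg _)
  obtain ⟨lam, uu, hl1, hl2, hunorm, hBij, hpars⟩ :=
    eigen_decomp n g hherm (1 - ξ) (by linarith)
      (fun u => by rw [hquad u]; linarith [hop u])
      (fun u => by rw [hquad u]; linarith [sq_nonneg ‖fderiv ℝ (f t) x u‖])
  have hK20 : 0 ≤ K2 := le_trans (norm_nonneg _) (hK2 x hx w hw)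
  have hlampos : ∀ p, 0 < lam p := fun p => lt_of_lt_of_le (by linarith) (hl1 p)
  -- the ψ-Hessian double sum bound
  set Gp : Fin n → Fin n → ℝ := fun i j =>
    fderiv ℝ (fderiv ℝ ψ) x (EuclideanSpace.single i 1) (EuclideanSpace.single j 1) α with hGp
  have hQ : ∀ u0 : EuclideanSpace ℝ (Fin n),
      ∑ i, ∑ j, (u0 i * u0 j) * Gp i j = fderiv ℝ (fderiv ℝ ψ) x u0 u0 α := by
    intro u0
    have h3 : ∀ i : Fin n, fderiv ℝ (fderiv ℝ ψ) x (EuclideanSpace.single i 1) u0 α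
        = ∑ j, u0 j * Gp i j := by
      intro i
      rw [clm_apply_expand (fderiv ℝ (fderiv ℝ ψ) x (EuclideanSpace.single i 1)) u0,
        WithLp.ofLp_sum, Finset.sum_apply]
      simp only [PiLp.smul_apply, smul_eq_mul, hGp]
    have h1 : fderiv ℝ (fderiv ℝ ψ) x u0
        = ∑ i, u0 i • fderiv ℝ (fderiv ℝ ψ) x (EuclideanSpace.single i 1) :=
      clm_apply_expand _ u0
    have h2 : fderiv ℝ (fderiv ℝ ψ) x u0 u0 α
        = ∑ i, u0 i * (fderiv ℝ (fderiv ℝ ψ) x (EuclideanSpace.single i 1) u0 α) := by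
      rw [h1, ContinuousLinearMap.sum_apply, WithLp.ofLp_sum, Finset.sum_apply]
      simp only [ContinuousLinearMap.smul_apply, PiLp.smul_apply, smul_eq_mul]
    rw [h2]
    apply Finset.sum_congr rfl
    intro i _
    rw [h3 i, Finset.mul_sum]
    apply Finset.sum_congr rfl
    intro j _
    ring
  have hGam : ∑ i, ∑ j, g⁻¹ i j * Gp i j ≤ ((n : ℝ) / (1 - ξ)) * K2 := by
    have h0 : ∑ i, ∑ j, g⁻¹ i j * Gp i j
        = ∑ p, (lam p)⁻¹ * (∑ i, ∑ j, (uu p i * uu p j) * Gp i j) := by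
      simp only [hBij]
      exact double_sum_decomp n (fun p => (lam p)⁻¹) (fun p i => uu p i) Gp
    rw [h0]
    have hterm : ∀ p, (lam p)⁻¹ * (∑ i, ∑ j, (uu p i * uu p j) * Gp i j)
        ≤ (1 - ξ)⁻¹ * K2 := by
      intro p
      have hQp : |∑ i, ∑ j, (uu p i * uu p j) * Gp i j| ≤ K2 := by
        rw [hQ (uu p)]
        exact le_trans (abs_coord_le m _ α) (hK2 x hx (uu p) (hunorm p))
      have hinv : (lam p)⁻¹ ≤ (1 - ξ)⁻¹ := inv_anti₀ (by linarith) (hl1 p)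
      calc (lam p)⁻¹ * (∑ i, ∑ j, (uu p i * uu p j) * Gp i j)
          ≤ (lam p)⁻¹ * K2 :=
            mul_le_mul_of_nonneg_left (le_of_abs_le hQp) (inv_nonneg.2 (hlampos p).le)
        _ ≤ (1 - ξ)⁻¹ * K2 := mul_le_mul_of_nonneg_right hinv hK20
    calc ∑ p, (lam p)⁻¹ * (∑ i, ∑ j, (uu p i * uu p j) * Gp i j)
        ≤ ∑ _p : Fin n, (1 - ξ)⁻¹ * K2 := Finset.sum_le_sum (fun p _ => hterm p)
      _ = (n : ℝ) * ((1 - ξ)⁻¹ * K2) := by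
          rw [Finset.sum_const, Finset.card_univ, Fintype.card_fin, nsmul_eq_mul]
      _ = ((n : ℝ) / (1 - ξ)) * K2 := by ring
  -- the w-quadratic form lower bound
  have hWlow : 1 ≤ ∑ i, ∑ j, g⁻¹ i j * (w i * w j) := by
    have h0 : ∑ i, ∑ j, g⁻¹ i j * (w i * w j)
        = ∑ p, (lam p)⁻¹ * (∑ i, ∑ j, (uu p i * uu p j) * (w i * w j)) := by
      simp only [hBij]
      exact double_sum_decomp n (fun p => (lam p)⁻¹) (fun p i => uu p i) (fun i j => w i * w j)
    have hsq : ∀ p, ∑ i, ∑ j, (uu p i * uu p j) * (w i * w j) = (∑ i, uu p i * w i) ^ 2 := by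
      intro p
      rw [sq, Finset.sum_mul_sum]
      apply Finset.sum_congr rfl
      intro i _
      apply Finset.sum_congr rfl
      intro j _
      ring
    calc (1 : ℝ) = ‖w‖ ^ 2 := by rw [hw]; norm_num
      _ = ∑ p, (∑ i, uu p i * w i) ^ 2 := (hpars w).symm
      _ ≤ ∑ p, (lam p)⁻¹ * (∑ i, uu p i * w i) ^ 2 := by
          apply Finset.sum_le_sum
          intro p _
          have h1 : 1 ≤ (lam p)⁻¹ := by
            have := inv_anti₀ (hlampos p) (hl2 p)
            simpa using this
          exact le_mul_of_one_le_left (sq_nonneg _) h1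
      _ = ∑ i, ∑ j, g⁻¹ i j * (w i * w j) := by
          rw [h0]
          apply Finset.sum_congr rfl
          intro p _
          rw [hsq p]
  -- final assembly
  have hsum : ∑ i, ∑ j, g⁻¹ i j *
        fderiv ℝ (fun y => fderiv ℝ (barrierS n m v k c₀ w α ψ f t) y
          (EuclideanSpace.single j 1)) x (EuclideanSpace.single i 1)
      = -(v * k ^ 2 * ((1 + k * ((inner ℝ w x : ℝ) + c₀)) ^ 2)⁻¹)
          * (∑ i, ∑ j, g⁻¹ i j * (w i * w j))
        - Fsum + ∑ i, ∑ j, g⁻¹ i j * Gp i j := by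
    simp only [hsec]
    have hterm : ∀ i j : Fin n, g⁻¹ i j *
          (-(v * k ^ 2 * (w i * w j)) * ((1 + k * ((inner ℝ w x : ℝ) + c₀)) ^ 2)⁻¹
            - hessM n m (f t) x i j α + Gp i j)
        = -(v * k ^ 2 * ((1 + k * ((inner ℝ w x : ℝ) + c₀)) ^ 2)⁻¹) * (g⁻¹ i j * (w i * w j))
          - g⁻¹ i j * hessM n m (f t) x i j α + g⁻¹ i j * Gp i j := by
      intro i j; ring
    rw [Finset.sum_congr rfl fun i _ => Finset.sum_congr rfl fun j _ => hterm i j]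
    simp only [Finset.sum_add_distrib, Finset.sum_sub_distrib, ← Finset.mul_sum]
    rw [hFsum]
  rw [hSt', hsum]
  have hq2 : v * k ^ 2 / (1 + k * δ) ^ 2
      ≤ v * k ^ 2 * ((1 + k * ((inner ℝ w x : ℝ) + c₀)) ^ 2)⁻¹ := by
    rw [div_eq_mul_inv]
    apply mul_le_mul_of_nonneg_left _ (by positivity)
    apply inv_anti₀ (by positivity)
    nlinarith [hpos1 x hx]
  have hq3 : v * k ^ 2 * ((1 + k * ((inner ℝ w x : ℝ) + c₀)) ^ 2)⁻¹ * 1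
      ≤ v * k ^ 2 * ((1 + k * ((inner ℝ w x : ℝ) + c₀)) ^ 2)⁻¹
        * (∑ i, ∑ j, g⁻¹ i j * (w i * w j)) :=
    mul_le_mul_of_nonneg_left hWlow (by positivity)
  nlinarith [hGam, hconstraint, hq2, hq3]

end
end

section
/- Let n, m ≥ 1, let h : {1,…,n} × {1,…,n} × {1,…,m} → ℝ satisfy the symmetry h(i,j,α) = h(j,i,α) for all i, j, α, and let λ₁,…,λₙ ∈ (−1,1) be real numbers such that λᵢ = 0 whenever i > m. Then Σ_{i,j=1}^{n} Σ_{α=1}^{m} h(i,j,α)² − Σ_{k=1}^{n} Σ_{i=1}^{min(n,m)} λᵢ² h(i,k,i)² − 2 Σ_{k=1}^{n} Σ_{1≤i<j≤min(n,m)} λᵢ λⱼ h(i,k,j) h(j,k,i) ≥ 0. -/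
/-- Split a square sum into diagonal plus two triangles. -/
lemma square_split (g : ℕ → ℕ → ℝ) (N : ℕ) :
    ∑ i ∈ Finset.range N, ∑ j ∈ Finset.range N, g i j
      = (∑ i ∈ Finset.range N, g i i)
        + ∑ j ∈ Finset.range N, ∑ i ∈ Finset.range j, (g i j + g j i) := by
  induction N with
  | zero => simp
  | succ N ih =>
      simp only [Finset.sum_range_succ, Finset.sum_add_distrib] at *
      linarith [ih]

/-- for symmetric coefficients `h(i,j,α)` (`i,j ∈ {0,…,n−1}`,
`α ∈ {0,…,m−1}`) and numbers `λᵢ ∈ (−1,1)` vanishing for `i ≥ m`, one has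
`‖B‖² − Σ_{k,i} λᵢ² h(i,k,i)² − 2 Σ_{k, i<j} λᵢ λⱼ h(i,k,j) h(j,k,i) ≥ 0`
(indices `i, j` of the last two sums range below `min n m`). -/
theorem stmt15 (n m : ℕ) (hn : 1 ≤ n) (hm : 1 ≤ m)
    (h : ℕ → ℕ → ℕ → ℝ)
    (hsym : ∀ i j α, i < n → j < n → α < m → h i j α = h j i α)
    (lam : ℕ → ℝ) (hlam : ∀ i, i < n → |lam i| < 1)
    (hrank : ∀ i, m ≤ i → lam i = 0) :
    0 ≤ (∑ i ∈ Finset.range n, ∑ j ∈ Finset.range n, ∑ α ∈ Finset.range m, h i j α ^ 2)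
        - (∑ k ∈ Finset.range n, ∑ i ∈ Finset.range (min n m), lam i ^ 2 * h i k i ^ 2)
        - 2 * ∑ k ∈ Finset.range n, ∑ j ∈ Finset.range (min n m), ∑ i ∈ Finset.range j,
            lam i * lam j * (h i k j * h j k i) := by
  set μ := min n m with hμ
  have hμn : μ ≤ n := Nat.min_le_left _ _
  have hμm : μ ≤ m := Nat.min_le_right _ _
  have hlam1 : ∀ i, i < μ → |lam i| ≤ 1 := fun i hi =>
    le_of_lt (hlam i (lt_of_lt_of_le hi hμn))
  -- per-k inequality
  have key : ∀ k,
      (∑ i ∈ Finset.range μ, lam i ^ 2 * h i k i ^ 2)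
      + 2 * ∑ j ∈ Finset.range μ, ∑ i ∈ Finset.range j,
          lam i * lam j * (h i k j * h j k i)
      ≤ ∑ i ∈ Finset.range μ, ∑ j ∈ Finset.range μ, h i k j ^ 2 := by
    intro k
    rw [square_split (fun i j => h i k j ^ 2) μ]
    have h1 : ∑ i ∈ Finset.range μ, lam i ^ 2 * h i k i ^ 2
        ≤ ∑ i ∈ Finset.range μ, h i k i ^ 2 := by
      apply Finset.sum_le_sum
      intro i hi
      have hb := hlam1 i (Finset.mem_range.mp hi)
      have h2 : lam i ^ 2 ≤ 1 := by
        have := abs_nonneg (lam i)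
        nlinarith [sq_abs (lam i)]
      nlinarith [sq_nonneg (h i k i)]
    have h2 : 2 * ∑ j ∈ Finset.range μ, ∑ i ∈ Finset.range j,
          lam i * lam j * (h i k j * h j k i)
        ≤ ∑ j ∈ Finset.range μ, ∑ i ∈ Finset.range j, (h i k j ^ 2 + h j k i ^ 2) := by
      rw [Finset.mul_sum]
      apply Finset.sum_le_sum
      intro j hj
      rw [Finset.mul_sum]
      apply Finset.sum_le_sum
      intro i hi
      have hj' := Finset.mem_range.mp hj
      have hi' : i < μ := lt_trans (Finset.mem_range.mp hi) hj'
      have hbi := hlam1 i hi'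
      have hbj := hlam1 j hj'
      have habs : |lam i * lam j| ≤ 1 := by
        rw [abs_mul]
        calc |lam i| * |lam j| ≤ 1 * 1 := by
              apply mul_le_mul hbi hbj (abs_nonneg _) zero_le_one
          _ = 1 := by ring
      have hp : lam i * lam j ≤ 1 := le_trans (le_abs_self _) habs
      have hmn : -1 ≤ lam i * lam j := by
        have := neg_abs_le (lam i * lam j); linarith
      nlinarith [mul_nonneg (by linarith : (0:ℝ) ≤ 1 + lam i * lam j)
          (sq_nonneg (h i k j - h j k i)),
        mul_nonneg (by linarith : (0:ℝ) ≤ 1 - lam i * lam j)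
          (sq_nonneg (h i k j + h j k i))]
    linarith
  -- compare the full sum with the sum of the per-k bounds
  have cmp : ∑ k ∈ Finset.range n, ∑ i ∈ Finset.range μ, ∑ j ∈ Finset.range μ, h i k j ^ 2
      ≤ ∑ i ∈ Finset.range n, ∑ j ∈ Finset.range n, ∑ α ∈ Finset.range m, h i j α ^ 2 := by
    rw [Finset.sum_comm]
    have hext : ∑ i ∈ Finset.range μ, ∑ k ∈ Finset.range n, ∑ j ∈ Finset.range μ, h i k j ^ 2
        ≤ ∑ i ∈ Finset.range n, ∑ k ∈ Finset.range n, ∑ j ∈ Finset.range μ, h i k j ^ 2 := by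
      apply Finset.sum_le_sum_of_subset_of_nonneg (Finset.range_subset_range.mpr hμn)
      intro i _ _; positivity
    refine le_trans hext (Finset.sum_le_sum ?_)
    intro i _
    have hsub : ∑ k ∈ Finset.range n, ∑ j ∈ Finset.range μ, h i k j ^ 2
        ≤ ∑ k ∈ Finset.range n, ∑ j ∈ Finset.range m, h i k j ^ 2 := by
      apply Finset.sum_le_sum
      intro k _
      apply Finset.sum_le_sum_of_subset_of_nonneg
      · exact Finset.range_subset_range.mpr hμm
      · intro j _ _; positivity
    calc ∑ k ∈ Finset.range n, ∑ j ∈ Finset.range μ, h i k j ^ 2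
        ≤ ∑ k ∈ Finset.range n, ∑ j ∈ Finset.range m, h i k j ^ 2 := hsub
      _ ≤ ∑ j ∈ Finset.range n, ∑ α ∈ Finset.range m, h i j α ^ 2 := le_refl _
  have total : (∑ k ∈ Finset.range n, ∑ i ∈ Finset.range μ, lam i ^ 2 * h i k i ^ 2)
      + 2 * ∑ k ∈ Finset.range n, ∑ j ∈ Finset.range μ, ∑ i ∈ Finset.range j,
          lam i * lam j * (h i k j * h j k i)
      ≤ ∑ k ∈ Finset.range n, ∑ i ∈ Finset.range μ, ∑ j ∈ Finset.range μ, h i k j ^ 2 := by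
    rw [Finset.mul_sum, ← Finset.sum_add_distrib]
    apply Finset.sum_le_sum
    intro k _
    have := key k
    linarith
  linarith
end
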